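/- arXiv:1206.4192 — 5 statements merged into one kernel-verified Lean document; each statement's English description precedes it below -/
import Mathlib

section
/- If a dictionary D with unit-norm columns has mutual coherence μ, then any set of s columns of D with s < 1 + 1/μ is linearly independent. -/
open Matrix

noncomputable def colInner {n k : ℕ} (D : Matrix (Fin n) (Fin k) ℝ) (i j : Fin k) : ℝ :=
  ∑ r, D r i * D r j

noncomputable def mutualCoherence {n k : ℕ} (D : Matrix (Fin n) (Fin k) ℝ)
    (hne : (Finset.univ.offDiag : Finset (Fin k × Fin k)).Nonempty) : ℝ :=
  Finset.sup' Finset.univ.offDiag hne (fun p => |colInner D p.1 p.2|)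

theorem stmt3 {n k : ℕ} (D : Matrix (Fin n) (Fin k) ℝ)
    (hne : (Finset.univ.offDiag : Finset (Fin k × Fin k)).Nonempty)
    (hunit : ∀ i : Fin k, colInner D i i = 1)
    (hmu : 0 < mutualCoherence D hne)
    (S : Finset (Fin k))
    (hS : (S.card : ℝ) < 1 + 1 / mutualCoherence D hne) :
    LinearIndependent ℝ (fun i : S => (fun r => D r (i : Fin k)) : S → Fin n → ℝ) := by
  set μ := mutualCoherence D hne with hμdef
  have hbound : ∀ i j : Fin k, i ≠ j → |colInner D i j| ≤ μ := by
    intro i j hij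
    have hmem : (i, j) ∈ (Finset.univ.offDiag : Finset (Fin k × Fin k)) := by
      simp [Finset.mem_offDiag, hij]
    exact Finset.le_sup' (fun p => |colInner D p.1 p.2|) hmem
  rw [Fintype.linearIndependent_iff]
  intro g hsum i₀
  by_contra hg0
  -- each row of the combination vanishes
  have hrow : ∀ r : Fin n, ∑ i : S, g i * D r (i : Fin k) = 0 := by
    intro r
    have := congrFun hsum r
    simpa [Finset.sum_apply] using this
  -- inner product with each column vanishes
  have hin : ∀ j : S, ∑ i : S, g i * colInner D (i : Fin k) (j : Fin k) = 0 := by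
    intro j
    have : ∑ i : S, g i * colInner D (i : Fin k) (j : Fin k)
        = ∑ r : Fin n, (∑ i : S, g i * D r (i : Fin k)) * D r (j : Fin k) := by
      simp only [colInner, Finset.mul_sum, Finset.sum_mul]
      rw [Finset.sum_comm]
      congr 1; funext r; congr 1; funext i; ring
    rw [this]
    simp only [← Finset.univ_eq_attach, hrow, zero_mul, Finset.sum_const_zero]
  -- pick the index with largest |g|
  obtain ⟨i₁, -, hmax⟩ := Finset.exists_max_image (Finset.univ : Finset S)
      (fun i => |g i|) ⟨i₀, Finset.mem_univ _⟩
  have hM0 : 0 < |g i₁| := lt_of_lt_of_le (abs_pos.mpr hg0) (hmax i₀ (Finset.mem_univ _))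
  -- diagonal dominance
  have hdiag : g i₁ = - ∑ i ∈ (Finset.univ : Finset S).erase i₁,
      g i * colInner D (i : Fin k) (i₁ : Fin k) := by
    have h := hin i₁
    rw [← Finset.add_sum_erase _ _ (Finset.mem_univ i₁)] at h
    rw [hunit] at h
    linarith
  have hineq : |g i₁| ≤ ((S.card : ℝ) - 1) * (|g i₁| * μ) := by
    have h1 : |g i₁| ≤ ∑ i ∈ (Finset.univ : Finset S).erase i₁,
        |g i * colInner D (i : Fin k) (i₁ : Fin k)| := by
      rw [hdiag, abs_neg]
      exact Finset.abs_sum_le_sum_abs _ _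
    have h2 : ∑ i ∈ (Finset.univ : Finset S).erase i₁,
        |g i * colInner D (i : Fin k) (i₁ : Fin k)|
        ≤ ∑ _i ∈ (Finset.univ : Finset S).erase i₁, |g i₁| * μ := by
      apply Finset.sum_le_sum
      intro i hi
      rw [abs_mul]
      have hne' : (i : Fin k) ≠ (i₁ : Fin k) := by
        intro h
        exact (Finset.mem_erase.mp hi).1 (Subtype.coe_injective h)
      exact mul_le_mul (hmax i (Finset.mem_univ _)) (hbound _ _ hne') (abs_nonneg _)
        (abs_nonneg _)
    have hcard : (((Finset.univ : Finset S).erase i₁).card : ℝ) = (S.card : ℝ) - 1 := by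
      rw [Finset.card_erase_of_mem (Finset.mem_univ _)]
      have h1le : 1 ≤ (Finset.univ : Finset S).card := Finset.card_pos.mpr ⟨i₁, Finset.mem_univ _⟩
      rw [Nat.cast_sub h1le]
      simp [Finset.card_univ, Fintype.card_coe]
    calc |g i₁| ≤ _ := h1
      _ ≤ _ := h2
      _ = (((Finset.univ : Finset S).erase i₁).card : ℝ) * (|g i₁| * μ) := by
        rw [Finset.sum_const, nsmul_eq_mul]
      _ = ((S.card : ℝ) - 1) * (|g i₁| * μ) := by rw [hcard]
  -- derive contradiction
  have hlt : ((S.card : ℝ) - 1) * μ < 1 := by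
    have : (S.card : ℝ) - 1 < 1 / μ := by linarith
    calc ((S.card : ℝ) - 1) * μ < (1 / μ) * μ := by
          exact mul_lt_mul_of_pos_right this hmu
      _ = 1 := by field_simp
  nlinarith [hineq, hM0, hlt]
end

section
/- If x = Dθ̂ with ‖θ̂‖₀ < (1/2)(1 + 1/μ(D)) and also x = Dθ with ‖θ‖₀ < (1/2)(1 + 1/μ(D)), then θ = θ̂. In other words, the sparse representation with sparsity below half the coherence threshold is unique. -/
open Matrix

/-- ℓ0 "norm": number of nonzero entries. -/
noncomputable def l0norm {k : ℕ} (θ : Fin k → ℝ) : ℕ :=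
  (Finset.univ.filter fun i => θ i ≠ 0).card

theorem stmt4 {n k : ℕ} (D : Matrix (Fin n) (Fin k) ℝ)
    (hne : (Finset.univ.offDiag : Finset (Fin k × Fin k)).Nonempty)
    (hunit : ∀ i : Fin k, colInner D i i = 1)
    (hmu : 0 < mutualCoherence D hne)
    (x : Fin n → ℝ) (θhat θ : Fin k → ℝ)
    (hx1 : x = D.mulVec θhat)
    (hs1 : (l0norm θhat : ℝ) < (1 / 2) * (1 + 1 / mutualCoherence D hne))
    (hx2 : x = D.mulVec θ)
    (hs2 : (l0norm θ : ℝ) < (1 / 2) * (1 + 1 / mutualCoherence D hne)) :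
    θ = θhat := by
  by_contra hneq
  set μ := mutualCoherence D hne with hμdef
  set δ : Fin k → ℝ := fun i => θ i - θhat i with hδ
  have hδne : ∃ i, δ i ≠ 0 := by
    by_contra h
    push_neg at h
    exact hneq (funext fun i => by have := h i; simp only [hδ, sub_eq_zero] at this; exact this)
  have hDδ : ∀ r, ∑ i, D r i * δ i = 0 := by
    intro r
    have h1 : D.mulVec θhat r = D.mulVec θ r := by rw [← hx1, ← hx2]
    simp only [Matrix.mulVec, dotProduct] at h1
    simp [hδ, mul_sub, Finset.sum_sub_distrib, h1]
  have key : ∑ i, ∑ j, δ i * δ j * colInner D i j = 0 := by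
    calc ∑ i, ∑ j, δ i * δ j * colInner D i j
        = ∑ i, ∑ j, ∑ r, (D r i * δ i) * (D r j * δ j) := by
          refine Finset.sum_congr rfl fun i _ => Finset.sum_congr rfl fun j _ => ?_
          rw [colInner, Finset.mul_sum]
          exact Finset.sum_congr rfl fun r _ => by ring
      _ = ∑ i, ∑ r, ∑ j, (D r i * δ i) * (D r j * δ j) :=
          Finset.sum_congr rfl fun i _ => Finset.sum_comm
      _ = ∑ r, ∑ i, ∑ j, (D r i * δ i) * (D r j * δ j) := Finset.sum_comm
      _ = ∑ r, (∑ i, D r i * δ i) * (∑ j, D r j * δ j) := by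
          refine Finset.sum_congr rfl fun r _ => ?_
          rw [Finset.sum_mul_sum]
      _ = 0 := by
          refine Finset.sum_eq_zero fun r _ => ?_
          rw [hDδ r]; ring
  have split : ∑ i, ∑ j, δ i * δ j * colInner D i j
      = (∑ i, δ i ^ 2) + ∑ p ∈ Finset.univ.offDiag, δ p.1 * δ p.2 * colInner D p.1 p.2 := by
    rw [← Finset.sum_product' (f := fun i j => δ i * δ j * colInner D i j)]
    rw [show (Finset.univ ×ˢ Finset.univ : Finset (Fin k × Fin k))
          = Finset.univ.diag ∪ Finset.univ.offDiag from
        (Finset.diag_union_offDiag _).symm]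
    rw [Finset.sum_union (Finset.disjoint_diag_offDiag _)]
    congr 1
    rw [Finset.sum_diag]
    exact Finset.sum_congr rfl fun i _ => by rw [hunit i]; ring
  have hE0 : (∑ i, δ i ^ 2)
      = - ∑ p ∈ Finset.univ.offDiag, δ p.1 * δ p.2 * colInner D p.1 p.2 := by
    rw [split] at key; linarith
  have hEpos : 0 < ∑ i, δ i ^ 2 := by
    obtain ⟨i, hi⟩ := hδne
    exact Finset.sum_pos' (fun j _ => sq_nonneg _) ⟨i, Finset.mem_univ i, by positivity⟩
  -- bound off-diagonal
  have hμb : ∀ p ∈ (Finset.univ.offDiag : Finset (Fin k × Fin k)),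
      |colInner D p.1 p.2| ≤ μ := fun p hp => by
    rw [hμdef, mutualCoherence]
    exact Finset.le_sup' (fun p => |colInner D p.1 p.2|) hp
  have h1 : ∑ i, δ i ^ 2 ≤ ∑ p ∈ Finset.univ.offDiag, |δ p.1| * |δ p.2| * μ := by
    rw [hE0]
    calc - ∑ p ∈ Finset.univ.offDiag, δ p.1 * δ p.2 * colInner D p.1 p.2
        ≤ |∑ p ∈ Finset.univ.offDiag, δ p.1 * δ p.2 * colInner D p.1 p.2| := neg_le_abs _
      _ ≤ ∑ p ∈ Finset.univ.offDiag, |δ p.1 * δ p.2 * colInner D p.1 p.2| :=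
          Finset.abs_sum_le_sum_abs _ _
      _ ≤ ∑ p ∈ Finset.univ.offDiag, |δ p.1| * |δ p.2| * μ := by
          refine Finset.sum_le_sum fun p hp => ?_
          rw [abs_mul, abs_mul]
          exact mul_le_mul_of_nonneg_left (hμb p hp) (by positivity)
  have hprod : ∑ p ∈ Finset.univ.offDiag, |δ p.1| * |δ p.2|
      = (∑ i, |δ i|) ^ 2 - ∑ i, δ i ^ 2 := by
    have h2 : (∑ i, |δ i|) ^ 2
        = ∑ p ∈ (Finset.univ ×ˢ Finset.univ : Finset (Fin k × Fin k)), |δ p.1| * |δ p.2| := by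
      rw [sq, Finset.sum_mul_sum, Finset.sum_product' (f := fun i j => |δ i| * |δ j|)]
    rw [h2, show (Finset.univ ×ˢ Finset.univ : Finset (Fin k × Fin k))
          = Finset.univ.diag ∪ Finset.univ.offDiag from
        (Finset.diag_union_offDiag _).symm,
      Finset.sum_union (Finset.disjoint_diag_offDiag _), Finset.sum_diag]
    have : ∑ i : Fin k, |δ i| * |δ i| = ∑ i, δ i ^ 2 :=
      Finset.sum_congr rfl fun i _ => by rw [← abs_mul, ← sq, abs_sq]
    rw [this]; ring
  have hmain : ∑ i, δ i ^ 2 ≤ μ * ((∑ i, |δ i|) ^ 2 - ∑ i, δ i ^ 2) := by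
    calc ∑ i, δ i ^ 2 ≤ ∑ p ∈ Finset.univ.offDiag, |δ p.1| * |δ p.2| * μ := h1
      _ = μ * ∑ p ∈ Finset.univ.offDiag, |δ p.1| * |δ p.2| := by
          rw [Finset.mul_sum]; exact Finset.sum_congr rfl fun p _ => by ring
      _ = μ * ((∑ i, |δ i|) ^ 2 - ∑ i, δ i ^ 2) := by rw [hprod]
  -- Cauchy-Schwarz on support
  set S : Finset (Fin k) := Finset.univ.filter fun i => δ i ≠ 0 with hS
  have hsumS : ∑ i, |δ i| = ∑ i ∈ S, |δ i| := by
    symm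
    refine Finset.sum_subset (Finset.filter_subset _ _) fun i _ hi => ?_
    simp only [hS, Finset.mem_filter, Finset.mem_univ, true_and, not_not] at hi
    simp [hi]
  have hCS : (∑ i, |δ i|) ^ 2 ≤ (S.card : ℝ) * ∑ i, δ i ^ 2 := by
    rw [hsumS]
    have := Finset.sum_mul_sq_le_sq_mul_sq S (fun i => |δ i|) (fun _ => 1)
    simp only [mul_one, one_pow] at this
    calc (∑ i ∈ S, |δ i|) ^ 2 ≤ (∑ i ∈ S, |δ i| ^ 2) * ∑ i ∈ S, (1:ℝ) := this
      _ = (∑ i ∈ S, δ i ^ 2) * S.card := by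
          rw [Finset.sum_const, nsmul_eq_mul, mul_one]
          congr 1
          exact Finset.sum_congr rfl fun i _ => by rw [sq_abs]
      _ ≤ (∑ i, δ i ^ 2) * S.card := by
          refine mul_le_mul_of_nonneg_right ?_ (Nat.cast_nonneg _)
          exact Finset.sum_le_sum_of_subset_of_nonneg (Finset.subset_univ _)
            (fun i _ _ => sq_nonneg _)
      _ = (S.card : ℝ) * ∑ i, δ i ^ 2 := by ring
  -- card bound
  have hcard : S.card ≤ l0norm θ + l0norm θhat := by
    unfold l0norm
    calc S.card ≤ ((Finset.univ.filter fun i => θ i ≠ 0)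
          ∪ (Finset.univ.filter fun i => θhat i ≠ 0)).card := by
          refine Finset.card_le_card fun i hi => ?_
          simp only [hS, Finset.mem_filter, Finset.mem_univ, true_and] at hi
          simp only [Finset.mem_union, Finset.mem_filter, Finset.mem_univ, true_and]
          by_contra hc
          push_neg at hc
          exact hi (by simp [hδ, hc.1, hc.2])
      _ ≤ _ := Finset.card_union_le _ _
  have hcardR : (S.card : ℝ) < 1 + 1 / μ := by
    have : (S.card : ℝ) ≤ (l0norm θ : ℝ) + (l0norm θhat : ℝ) := by
      exact_mod_cast hcard
    linarith
  -- final contradiction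
  set E := ∑ i, δ i ^ 2
  set A := ∑ i, |δ i|
  have h3 : A ^ 2 ≤ (S.card : ℝ) * E := hCS
  have h4 : E ≤ μ * (A ^ 2 - E) := hmain
  have h5 : μ * (A ^ 2 - E) ≤ μ * ((S.card : ℝ) * E - E) := by
    refine mul_le_mul_of_nonneg_left (by linarith) hmu.le
  have h6 : μ * ((S.card : ℝ) * E - E) < μ * ((1 + 1/μ) * E - E) := by
    refine mul_lt_mul_of_pos_left ?_ hmu
    have := mul_lt_mul_of_pos_right hcardR hEpos
    linarith
  have h7 : μ * ((1 + 1/μ) * E - E) = E := by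
    field_simp
    ring
  linarith
end

section
/- If θ̂ satisfies x = Dθ̂ with ‖θ̂‖₀ < (1/2)(1 + 1/μ(D)), then θ̂ is a solution of min ‖θ‖₀ subject to x = Dθ; i.e., every θ with x = Dθ satisfies ‖θ‖₀ ≥ ‖θ̂‖₀. -/
open Matrix

theorem stmt5 {n k : ℕ} (D : Matrix (Fin n) (Fin k) ℝ)
    (hne : (Finset.univ.offDiag : Finset (Fin k × Fin k)).Nonempty)
    (hunit : ∀ i : Fin k, colInner D i i = 1)
    (hmu : 0 < mutualCoherence D hne)
    (x : Fin n → ℝ) (θhat : Fin k → ℝ)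
    (hx : x = D.mulVec θhat)
    (hs : (l0norm θhat : ℝ) < (1 / 2) * (1 + 1 / mutualCoherence D hne)) :
    ∀ θ : Fin k → ℝ, x = D.mulVec θ → l0norm θhat ≤ l0norm θ := by
  intro θ hθ
  set μ := mutualCoherence D hne with hμdef
  have hμbound : ∀ i j : Fin k, i ≠ j → |colInner D i j| ≤ μ := by
    intro i j hij
    have hmem : ((i, j) : Fin k × Fin k) ∈ Finset.univ.offDiag :=
      Finset.mem_offDiag.mpr ⟨Finset.mem_univ _, Finset.mem_univ _, hij⟩
    exact Finset.le_sup' (fun p => |colInner D p.1 p.2|) hmem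
  by_cases hδ0 : θ - θhat = 0
  · have hθeq : θ = θhat := by
      funext i
      have := congrFun hδ0 i
      simpa [sub_eq_zero] using this
    simp [hθeq]
  · set δ : Fin k → ℝ := θ - θhat with hδdef
    have hker : D.mulVec δ = 0 := by
      rw [hδdef, Matrix.mulVec_sub, ← hθ, ← hx, sub_self]
    have hgram : ∀ i, ∑ j, colInner D i j * δ j = 0 := by
      intro i
      have h1 : ∑ j, colInner D i j * δ j = ∑ r, D r i * (D.mulVec δ) r := by
        simp only [colInner, Matrix.mulVec, dotProduct, Finset.sum_mul, Finset.mul_sum]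
        rw [Finset.sum_comm]
        apply Finset.sum_congr rfl
        intro r _
        apply Finset.sum_congr rfl
        intro j _
        ring
      rw [h1, hker]
      simp
    set S : Finset (Fin k) := Finset.univ.filter fun i => δ i ≠ 0 with hSdef
    have hSne : S.Nonempty := by
      rcases Function.ne_iff.mp hδ0 with ⟨i, hi⟩
      exact ⟨i, by simp [hSdef]; simpa using hi⟩
    obtain ⟨i₀, hi₀S, hi₀max⟩ := S.exists_max_image (fun i => |δ i|) hSne
    have hδi₀ : δ i₀ ≠ 0 := by simpa [hSdef] using hi₀S
    have hδi₀pos : 0 < |δ i₀| := abs_pos.mpr hδi₀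
    -- δ i₀ = - ∑ over j ≠ i₀
    have hsplit : δ i₀ + ∑ j ∈ Finset.univ.erase i₀, colInner D i₀ j * δ j = 0 := by
      have := hgram i₀
      rw [← Finset.add_sum_erase _ _ (Finset.mem_univ i₀)] at this
      simpa [hunit i₀] using this
    have hbound : |δ i₀| ≤ μ * ((S.card : ℝ) - 1) * |δ i₀| := by
      have h2 : δ i₀ = -∑ j ∈ Finset.univ.erase i₀, colInner D i₀ j * δ j := by
        linarith [hsplit]
      have h3 : |δ i₀| ≤ ∑ j ∈ Finset.univ.erase i₀, |colInner D i₀ j * δ j| := by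
        rw [h2, abs_neg]
        exact Finset.abs_sum_le_sum_abs _ _
      have h4 : ∑ j ∈ Finset.univ.erase i₀, |colInner D i₀ j * δ j|
          = ∑ j ∈ S.erase i₀, |colInner D i₀ j * δ j| := by
        apply (Finset.sum_subset _ _).symm
        · intro j hj
          rcases Finset.mem_erase.mp hj with ⟨hj1, hj2⟩
          exact Finset.mem_erase.mpr ⟨hj1, Finset.mem_univ j⟩
        · intro j hj hjS
          rcases Finset.mem_erase.mp hj with ⟨hj1, _⟩
          have : δ j = 0 := by
            by_contra hc
            exact hjS (Finset.mem_erase.mpr ⟨hj1, by simp [hSdef, hc]⟩)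
          simp [this]
      have h5 : ∑ j ∈ S.erase i₀, |colInner D i₀ j * δ j|
          ≤ ∑ j ∈ S.erase i₀, μ * |δ i₀| := by
        apply Finset.sum_le_sum
        intro j hj
        rcases Finset.mem_erase.mp hj with ⟨hj1, hj2⟩
        rw [abs_mul]
        exact mul_le_mul (hμbound i₀ j (Ne.symm hj1)) (hi₀max j hj2)
          (abs_nonneg _) (le_of_lt hmu)
      have h6 : ∑ j ∈ S.erase i₀, μ * |δ i₀| = ((S.erase i₀).card : ℝ) * (μ * |δ i₀|) := by
        rw [Finset.sum_const, nsmul_eq_mul]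
      have h7 : ((S.erase i₀).card : ℝ) = (S.card : ℝ) - 1 := by
        rw [Finset.card_erase_of_mem hi₀S]
        have : 1 ≤ S.card := Finset.card_pos.mpr hSne
        push_cast [Nat.cast_sub this]
        ring
      calc |δ i₀| ≤ ∑ j ∈ Finset.univ.erase i₀, |colInner D i₀ j * δ j| := h3
        _ = ∑ j ∈ S.erase i₀, |colInner D i₀ j * δ j| := h4
        _ ≤ ∑ j ∈ S.erase i₀, μ * |δ i₀| := h5
        _ = ((S.card : ℝ) - 1) * (μ * |δ i₀|) := by rw [h6, h7]
        _ = μ * ((S.card : ℝ) - 1) * |δ i₀| := by ring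
    -- spark bound: S.card ≥ 1 + 1/μ
    have hspark : 1 + 1 / μ ≤ (S.card : ℝ) := by
      have h1 : 1 ≤ μ * ((S.card : ℝ) - 1) := by
        by_contra hc
        push_neg at hc
        nlinarith [hδi₀pos]
      have h2 : 1 / μ ≤ (S.card : ℝ) - 1 := by
        rw [div_le_iff₀ hmu] at *
        nlinarith
      linarith
    -- support union bound : S.card ≤ l0norm θ + l0norm θhat
    have hunion : (S.card : ℝ) ≤ (l0norm θ : ℝ) + (l0norm θhat : ℝ) := by
      have hsub : S ⊆ (Finset.univ.filter fun i => θ i ≠ 0) ∪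
          (Finset.univ.filter fun i => θhat i ≠ 0) := by
        intro i hi
        have hδi : δ i ≠ 0 := by simpa [hSdef] using hi
        by_cases hθi : θ i = 0
        · have : θhat i ≠ 0 := by
            intro hh
            apply hδi
            simp [hδdef, hθi, hh]
          exact Finset.mem_union_right _ (by simp [this])
        · exact Finset.mem_union_left _ (by simp [hθi])
      have := le_trans (Finset.card_le_card hsub) (Finset.card_union_le _ _)
      unfold l0norm
      exact_mod_cast this
    -- conclude
    have hfin : (l0norm θhat : ℝ) < (l0norm θ : ℝ) := by
      have : 2 * (l0norm θhat : ℝ) < 1 + 1 / μ := by linarith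
      linarith
    exact_mod_cast le_of_lt hfin
end

section
/- The spark of a unit-norm column dictionary D satisfies spark(D) ≥ 1 + 1/μ(D), where spark(D) is the smallest number of linearly dependent columns. -/
open Matrix

/-- Spark: the smallest number of linearly dependent columns, i.e. the least
ℓ0 norm of a nonzero kernel vector. -/
noncomputable def spark {n k : ℕ} (D : Matrix (Fin n) (Fin k) ℝ) : ℕ :=
  sInf {c : ℕ | ∃ v : Fin k → ℝ, v ≠ 0 ∧ D.mulVec v = 0 ∧ l0norm v = c}

/-!
If `Dv = 0` with `v ≠ 0`, then also `DᵀD v = 0`. Pick `i` with `|vᵢ|` maximal; the `i`-th row of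
`DᵀD v = 0` reads `vᵢ = -∑_{j ≠ i} ⟨dᵢ, dⱼ⟩ vⱼ`, and only the `‖v‖₀ - 1` nonzero `vⱼ`, `j ≠ i`,
contribute, each at most `μ |vᵢ|`. Hence `1 ≤ (‖v‖₀ - 1) μ`, and a sparsest kernel vector gives the
bound on the spark.
-/

theorem one_le_card_support_sub_one_mul_of_mulVec_eq_zero {ι : Type*} [Fintype ι] [DecidableEq ι]
    {G : Matrix ι ι ℝ} {μ : ℝ} (hdiag : ∀ i, G i i = 1) (hoff : ∀ i j, i ≠ j → |G i j| ≤ μ)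
    {v : ι → ℝ} (hv : v ≠ 0) (hGv : G *ᵥ v = 0) :
    1 ≤ (((Finset.univ.filter fun j => v j ≠ 0).card : ℝ) - 1) * μ := by
  set S := Finset.univ.filter fun j => v j ≠ 0
  obtain ⟨j₀, hj₀⟩ := Function.ne_iff.mp hv
  have : Nonempty ι := ⟨j₀⟩
  obtain ⟨i, hmax⟩ := Finite.exists_max fun j => |v j|
  have hvi : 0 < |v i| := (abs_pos.mpr hj₀).trans_le (hmax j₀)
  have hiS : i ∈ S := Finset.mem_filter.mpr ⟨Finset.mem_univ i, abs_pos.mp hvi⟩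
  have hrow : v i = -∑ j ∈ S.erase i, G i j * v j := by
    have h : ∑ j ∈ S, G i j * v j = 0 := by
      rw [Finset.sum_filter_of_ne fun j _ => right_ne_zero_of_mul]
      exact congrFun hGv i
    rw [← Finset.add_sum_erase S _ hiS, hdiag, one_mul] at h
    linarith
  have hbound : |v i| ≤ ((S.erase i).card : ℝ) * (μ * |v i|) := by
    calc |v i| = |∑ j ∈ S.erase i, G i j * v j| := by rw [hrow, abs_neg]
      _ ≤ ∑ j ∈ S.erase i, |G i j| * |v j| := by
          simpa only [abs_mul] using Finset.abs_sum_le_sum_abs (fun j => G i j * v j) (S.erase i)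
      _ ≤ ∑ _j ∈ S.erase i, μ * |v i| := by
          refine Finset.sum_le_sum fun j hj => ?_
          have hGij := hoff i j (Finset.ne_of_mem_erase hj).symm
          exact mul_le_mul hGij (hmax j) (abs_nonneg _) ((abs_nonneg _).trans hGij)
      _ = ((S.erase i).card : ℝ) * (μ * |v i|) := by rw [Finset.sum_const, nsmul_eq_mul]
  rw [Finset.card_erase_of_mem hiS, Nat.cast_sub (Finset.card_pos.mpr ⟨i, hiS⟩),
    Nat.cast_one, ← mul_assoc] at hbound
  exact le_of_mul_le_mul_right (by rwa [one_mul]) hvi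

theorem colInner_eq_transpose_mul_apply {n k : ℕ} (D : Matrix (Fin n) (Fin k) ℝ) (i j : Fin k) :
    colInner D i j = (Dᵀ * D) i j := by
  simp only [colInner, mul_apply, transpose_apply]

theorem abs_colInner_le_mutualCoherence {n k : ℕ} (D : Matrix (Fin n) (Fin k) ℝ)
    (hne : (Finset.univ.offDiag : Finset (Fin k × Fin k)).Nonempty) {i j : Fin k} (hij : i ≠ j) :
    |colInner D i j| ≤ mutualCoherence D hne :=
  Finset.le_sup' (fun p : Fin k × Fin k => |colInner D p.1 p.2|) (b := (i, j))
    (Finset.mem_offDiag.mpr ⟨Finset.mem_univ i, Finset.mem_univ j, hij⟩)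

theorem mutualCoherence_nonneg {n k : ℕ} (D : Matrix (Fin n) (Fin k) ℝ)
    (hne : (Finset.univ.offDiag : Finset (Fin k × Fin k)).Nonempty) :
    0 ≤ mutualCoherence D hne := by
  obtain ⟨⟨i, j⟩, hij⟩ := hne
  exact (abs_nonneg _).trans
    (abs_colInner_le_mutualCoherence D _ (Finset.mem_offDiag.mp hij).2.2)

theorem exists_l0norm_eq_spark {n k : ℕ} {D : Matrix (Fin n) (Fin k) ℝ}
    (hker : ∃ v : Fin k → ℝ, v ≠ 0 ∧ D *ᵥ v = 0) :
    ∃ v : Fin k → ℝ, v ≠ 0 ∧ D *ᵥ v = 0 ∧ l0norm v = spark D := by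
  obtain ⟨v, hv, hDv⟩ := hker
  exact Nat.sInf_mem (s := {c | ∃ v : Fin k → ℝ, v ≠ 0 ∧ D *ᵥ v = 0 ∧ l0norm v = c})
    ⟨l0norm v, v, hv, hDv, rfl⟩

theorem stmt6_general {n k : ℕ} (D : Matrix (Fin n) (Fin k) ℝ)
    (hne : (Finset.univ.offDiag : Finset (Fin k × Fin k)).Nonempty)
    (hunit : ∀ i : Fin k, colInner D i i = 1)
    (hker : ∃ v : Fin k → ℝ, v ≠ 0 ∧ D.mulVec v = 0) :
    1 + 1 / mutualCoherence D hne ≤ (spark D : ℝ) := by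
  set μ := mutualCoherence D hne
  obtain ⟨v, hv, hDv, hspark⟩ := exists_l0norm_eq_spark hker
  have hGv : (Dᵀ * D) *ᵥ v = 0 := by rw [← mulVec_mulVec, hDv, mulVec_zero]
  have hsparse : 1 ≤ ((spark D : ℝ) - 1) * μ := by
    rw [← hspark]
    refine one_le_card_support_sub_one_mul_of_mulVec_eq_zero
      (fun i => ?_) (fun i j hij => ?_) hv hGv
    · rw [← colInner_eq_transpose_mul_apply, hunit]
    · rw [← colInner_eq_transpose_mul_apply]
      exact abs_colInner_le_mutualCoherence D hne hij
  have hμ : 0 < μ := (mutualCoherence_nonneg D hne).lt_of_ne fun h => by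
    norm_num [μ, ← h] at hsparse
  rw [one_div, ← le_sub_iff_add_le', inv_le_iff_one_le_mul₀' hμ]
  linarith

theorem stmt6 {n k : ℕ} (D : Matrix (Fin n) (Fin k) ℝ)
    (hne : (Finset.univ.offDiag : Finset (Fin k × Fin k)).Nonempty)
    (hunit : ∀ i : Fin k, colInner D i i = 1)
    (hmu : 0 < mutualCoherence D hne)
    (hker : ∃ v : Fin k → ℝ, v ≠ 0 ∧ D.mulVec v = 0) :
    1 + 1 / mutualCoherence D hne ≤ (spark D : ℝ) :=
  stmt6_general D hne hunit hker
end

section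
/- If a symmetric k×k matrix G has rank m < k and all diagonal entries equal to 1, then the maximum off-diagonal absolute value of G is at least sqrt((k−m)/(m(k−1))) (the Welch bound). -/
open Matrix Finset

/-- Welch bound. -/
theorem stmt16 (k m : ℕ) (hm : 1 ≤ m) (hmk : m < k)
    (G : Matrix (Fin k) (Fin k) ℝ)
    (hpsd : G.PosSemidef) (hrank : G.rank = m)
    (hdiag : ∀ i : Fin k, G i i = 1) :
    ∃ i j : Fin k, i ≠ j ∧
      Real.sqrt (((k : ℝ) - m) / (m * ((k : ℝ) - 1))) ≤ |G i j| := by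
  have hk2 : 2 ≤ k := Nat.lt_of_le_of_lt hm hmk
  have hH : G.IsHermitian := hpsd.1
  set μ : Fin k → ℝ := hH.eigenvalues with hμ
  set U : Matrix (Fin k) (Fin k) ℝ := (hH.eigenvectorUnitary : Matrix (Fin k) (Fin k) ℝ) with hU
  have hUU : star U * U = 1 := by
    rw [hU]
    exact (Matrix.mem_unitaryGroup_iff').mp hH.eigenvectorUnitary.2
  have hofReal : (RCLike.ofReal ∘ μ) = μ := by
    funext i; simp [RCLike.ofReal]
  have hspec : G = U * diagonal μ * star U := by
    have := hH.spectral_theorem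
    rwa [hofReal] at this
  -- trace G = ∑ μ
  have htrG : G.trace = ∑ i, μ i := by
    rw [hspec, Matrix.trace_mul_cycle, hUU, one_mul, Matrix.trace_diagonal]
  have htrGk : G.trace = (k : ℝ) := by
    simp [Matrix.trace, Matrix.diag, hdiag]
  -- trace (G*G) = ∑ μ²
  have hGG : G * G = U * diagonal (fun i => μ i ^ 2) * star U := by
    rw [hspec]
    have h : (U * diagonal μ * star U) * (U * diagonal μ * star U)
        = U * (diagonal μ * ((star U * U) * (diagonal μ * star U))) := by
      simp only [mul_assoc]
    rw [h, hUU, one_mul, ← Matrix.mul_assoc (diagonal μ), diagonal_mul_diagonal, ← mul_assoc]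
    congr 2
    funext i; ring
  have htrGG : (G * G).trace = ∑ i, μ i ^ 2 := by
    rw [hGG, Matrix.trace_mul_cycle, hUU, one_mul, Matrix.trace_diagonal]
  -- trace (G*G) as sum of squares of entries
  have htrGG2 : (G * G).trace = ∑ i, ∑ j, (G i j) ^ 2 := by
    rw [Matrix.trace]
    congr 1; funext i
    rw [Matrix.diag]
    rw [Matrix.mul_apply]
    congr 1; funext j
    have : G j i = G i j := by
      have := congrFun (congrFun hH i) j
      simpa [Matrix.conjTranspose_apply] using this
    rw [this]; ring
  -- rank and eigenvalue support
  classical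
  set s : Finset (Fin k) := univ.filter (fun i => μ i ≠ 0) with hs
  have hcard : s.card = m := by
    rw [hs, ← Fintype.card_subtype]
    exact hH.rank_eq_card_non_zero_eigs.symm.trans hrank
  -- Cauchy–Schwarz
  have hsum_s : ∑ i ∈ s, μ i = ∑ i, μ i := by
    apply Finset.sum_subset (Finset.subset_univ _)
    intro i _ hi
    simp [hs] at hi
    exact hi
  have hCS : (∑ i, μ i) ^ 2 ≤ (m : ℝ) * ∑ i, μ i ^ 2 := by
    have h1 := Finset.sum_mul_sq_le_sq_mul_sq s (fun _ => (1:ℝ)) μ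
    simp only [one_mul, one_pow, Finset.sum_const, nsmul_eq_mul, mul_one] at h1
    rw [hsum_s, hcard] at h1
    refine h1.trans (mul_le_mul_of_nonneg_left ?_ (by positivity))
    refine Finset.sum_le_sum_of_subset_of_nonneg (Finset.subset_univ _) ?_
    intro i _ _
    positivity
  -- the off-diagonal sum
  have hsplit : ∑ i, ∑ j, (G i j) ^ 2
      = (k : ℝ) + ∑ p ∈ (univ : Finset (Fin k)).offDiag, (G p.1 p.2) ^ 2 := by
    rw [← Finset.sum_product']
    rw [← Finset.diag_union_offDiag (univ : Finset (Fin k)),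
      Finset.sum_union (Finset.disjoint_diag_offDiag _)]
    congr 1
    rw [Finset.sum_diag]
    simp [hdiag]
  -- choose maximizer
  have hne : ((univ : Finset (Fin k)).offDiag).Nonempty := by
    refine ⟨(⟨0, by omega⟩, ⟨1, by omega⟩), ?_⟩
    simp [Finset.mem_offDiag, Fin.ext_iff]
  obtain ⟨p, hp, hmax⟩ := Finset.exists_max_image _ (fun p => |G p.1 p.2|) hne
  rw [Finset.mem_offDiag] at hp
  refine ⟨p.1, p.2, hp.2.2, ?_⟩
  set M := |G p.1 p.2| with hM
  have hM0 : 0 ≤ M := abs_nonneg _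
  have hSbound : ∑ q ∈ (univ : Finset (Fin k)).offDiag, (G q.1 q.2) ^ 2
      ≤ ((k : ℝ) * k - k) * M ^ 2 := by
    have hcard' : ((univ : Finset (Fin k)).offDiag).card = k * k - k := by
      rw [Finset.offDiag_card, Finset.card_univ, Fintype.card_fin]
    calc ∑ q ∈ (univ : Finset (Fin k)).offDiag, (G q.1 q.2) ^ 2
        ≤ ∑ q ∈ (univ : Finset (Fin k)).offDiag, M ^ 2 := by
          apply Finset.sum_le_sum
          intro q hq
          have := hmax q hq
          have h2 : |G q.1 q.2| ^ 2 ≤ M ^ 2 := by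
            apply pow_le_pow_left₀ (abs_nonneg _) this
          simpa [sq_abs] using h2
      _ = ((k : ℝ) * k - k) * M ^ 2 := by
          rw [Finset.sum_const, hcard', nsmul_eq_mul]
          congr 1
          have hle : k ≤ k * k := Nat.le_mul_of_pos_left k (by omega)
          rw [Nat.cast_sub hle]
          push_cast
          ring
  -- main inequality
  have hkey : (k : ℝ) ^ 2 ≤ (m : ℝ) * ((k : ℝ) + ((k : ℝ) * k - k) * M ^ 2) := by
    have h1 : (k : ℝ) ^ 2 ≤ (m : ℝ) * ∑ i, μ i ^ 2 := by
      rw [← htrG, htrGk] at hCS; exact hCS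
    rw [← htrGG, htrGG2, hsplit] at h1
    refine h1.trans ?_
    have hm0 : (0:ℝ) ≤ m := by positivity
    nlinarith [hSbound]
  have hkR : (2 : ℝ) ≤ (k : ℝ) := by exact_mod_cast hk2
  have hmR : (1 : ℝ) ≤ (m : ℝ) := by exact_mod_cast hm
  have hmkR : (m : ℝ) < (k : ℝ) := by exact_mod_cast hmk
  have hden : (0:ℝ) < (m : ℝ) * ((k : ℝ) - 1) := by nlinarith
  have hfrac : ((k : ℝ) - m) / ((m : ℝ) * ((k : ℝ) - 1)) ≤ M ^ 2 := by
    rw [div_le_iff₀ hden]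
    nlinarith [hkey]
  calc Real.sqrt (((k : ℝ) - m) / (m * ((k : ℝ) - 1)))
      ≤ Real.sqrt (M ^ 2) := Real.sqrt_le_sqrt hfrac
    _ = M := by rw [Real.sqrt_sq hM0]
end
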